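/- arXiv:alg-geom/9706003 — 2 statements merged into one kernel-verified Lean document; each statement's English description precedes it below -/
import Mathlib

section
/- Conversely, suppose Φ₀, Φ₁ ∈ ℂ[[x]] satisfy the rank-one Getzler equation −(Φ₀''')²·Φ₁'' + Φ₀'''·Φ₀⁽⁴⁾·Φ₁' − (1/12)·(Φ₀⁽⁴⁾)² + (1/24)·Φ₀'''·Φ₀⁽⁵⁾ = 0, where Φ₀''' is invertible in ℂ[[x]] with constant term I₀₃ ≠ 0, and Φ₁ has zero constant term. Then Φ₁ = (1/24)·log(Φ₀'''/I₀₃) + B·(Φ₀'' − c) for some constant B ∈ ℂ, where c is the constant term of Φ₀''. -/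
open PowerSeries Finset

/-- Formal logarithm of a power series with constant term 1:
`log G = ∑_{n≥1} (-1)^(n+1) (G-1)^n / n`. -/
noncomputable def psLog (G : PowerSeries ℂ) : PowerSeries ℂ :=
  PowerSeries.mk fun d =>
    ∑ n ∈ Finset.range (d + 1), ((-1 : ℂ) ^ (n + 1) / n) * PowerSeries.coeff d ((G - 1) ^ n)

lemma coeff_pow_eq_zero_lt {u : PowerSeries ℂ} (hu : constantCoeff u = 0)
    {k n : ℕ} (h : k < n) : coeff k (u ^ n) = 0 := by
  have hdvd : (X : PowerSeries ℂ) ^ n ∣ u ^ n :=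
    pow_dvd_pow_of_dvd (X_dvd_iff.mpr hu) n
  exact (X_pow_dvd_iff.mp hdvd) k h

lemma psLog_coeff_partial (G : PowerSeries ℂ) (hG : constantCoeff G = 1)
    {d N : ℕ} (h : d ≤ N) :
    coeff d (psLog G)
      = coeff d (∑ n ∈ range (N + 1), C ((-1 : ℂ) ^ (n + 1) / n) * (G - 1) ^ n) := by
  rw [psLog, coeff_mk, map_sum]
  simp only [coeff_C_mul]
  apply Finset.sum_subset (Finset.range_subset_range.mpr (by omega))
  intro n hn hnd
  have hd : d < n := by
    simp only [Finset.mem_range] at hn hnd; omega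
  rw [coeff_pow_eq_zero_lt (by simp [hG]) hd, mul_zero]

lemma psLog_constantCoeff (G : PowerSeries ℂ) : constantCoeff (psLog G) = 0 := by
  rw [← coeff_zero_eq_constantCoeff_apply, psLog, coeff_mk]
  simp

lemma psLog_deriv (G : PowerSeries ℂ) (hG : constantCoeff G = 1) :
    G * (derivative ℂ (psLog G)) = derivative ℂ G := by
  ext d
  set N := d + 1 with hN
  set u := G - 1 with hu
  have hu0 : constantCoeff u = 0 := by simp [hu, hG]
  set L : PowerSeries ℂ := ∑ n ∈ range (N + 1), C ((-1 : ℂ) ^ (n + 1) / n) * u ^ n with hL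
  have hDL : derivative ℂ L = (∑ i ∈ range N, (-u) ^ i) * derivative ℂ u := by
    rw [hL, map_sum, Finset.sum_range_succ', Finset.sum_mul]
    have h0 : derivative ℂ (C ((-1 : ℂ) ^ (0 + 1) / (0 : ℕ)) * u ^ 0) = 0 := by simp
    rw [h0, add_zero]
    apply Finset.sum_congr rfl
    intro i _
    set c : ℂ := (-1 : ℂ) ^ (i + 1 + 1) / (i + 1 : ℕ) with hcdef
    have hn0 : ((i + 1 : ℕ) : ℂ) ≠ 0 := Nat.cast_ne_zero.mpr (Nat.succ_ne_zero i)
    have hcc : c * ((i + 1 : ℕ) : ℂ) = (-1 : ℂ) ^ i := by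
      rw [hcdef, div_mul_cancel₀ _ hn0, pow_succ, pow_succ]; ring
    have e1 : derivative ℂ (C c * u ^ (i + 1))
        = C (c * ((i + 1 : ℕ) : ℂ)) * u ^ i * derivative ℂ u := by
      rw [Derivation.leibniz, Derivation.leibniz_pow, derivative_C, map_mul, map_natCast]
      simp only [smul_eq_mul, nsmul_eq_mul, smul_zero, add_zero, Nat.add_sub_cancel]
      ring
    have e2 : (-u) ^ i = C ((-1 : ℂ) ^ i) * u ^ i := by
      rw [neg_pow, map_pow, map_neg, map_one]
    rw [e1, hcc, e2]
  have hgeom : G * derivative ℂ L = derivative ℂ G - (-u) ^ N * derivative ℂ G := by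
    have hDu : derivative ℂ u = derivative ℂ G := by rw [hu]; simp
    have hGu : G = 1 + u := by rw [hu]; ring
    have hg : (∑ i ∈ range N, (-u) ^ i) * (-u - 1) = (-u) ^ N - 1 := geom_sum_mul (-u) N
    rw [hDL, hDu]
    linear_combination (-(derivative ℂ G)) * hg
      + (∑ i ∈ range N, (-u) ^ i) * (derivative ℂ G) * hGu
  have hA : ∀ k ∈ antidiagonal d,
      coeff k.1 G * coeff k.2 (derivative ℂ (psLog G))
        = coeff k.1 G * coeff k.2 (derivative ℂ L) := by
    intro k hk
    have hk2 : k.2 + 1 ≤ N := by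
      have := Finset.HasAntidiagonal.mem_antidiagonal.mp hk; omega
    rw [coeff_derivative, coeff_derivative, psLog_coeff_partial G hG hk2]
  have hmain : coeff d (G * derivative ℂ (psLog G)) = coeff d (G * derivative ℂ L) := by
    rw [coeff_mul, coeff_mul]
    exact Finset.sum_congr rfl hA
  have hvanish : coeff d ((-u) ^ N * derivative ℂ G) = 0 := by
    rw [coeff_mul]
    apply Finset.sum_eq_zero
    intro k hk
    have hk1 : k.1 < N := by
      have := Finset.HasAntidiagonal.mem_antidiagonal.mp hk; omega
    rw [coeff_pow_eq_zero_lt (by simp [hu0]) hk1, zero_mul]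
  rw [hmain, hgeom]
  simp [hvanish]

lemma eq_C_of_derivative_eq_zero {f : PowerSeries ℂ} (h : derivative ℂ f = 0) :
    f = C (constantCoeff f) :=
  derivative.ext (by simp [h]) (by simp)


/-- if `(Φ₀, Φ₁)` satisfies the rank-one Getzler equation, with
`Φ₀'''` invertible (constant term `I₀₃ ≠ 0`) and `Φ₁` of zero constant term, then
`Φ₁ = (1/24)·log(Φ₀'''/I₀₃) + B·(Φ₀'' − c)` for some constant `B`, where `c` is
the constant term of `Φ₀''`. -/
theorem rank_one_getzler_converse (Φ₀ Φ₁ : PowerSeries ℂ) (I₀₃ : ℂ)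
    (D : PowerSeries ℂ → PowerSeries ℂ)
    (hD : D = ⇑(PowerSeries.derivative ℂ))
    (hI : PowerSeries.constantCoeff (D^[3] Φ₀) = I₀₃) (hI0 : I₀₃ ≠ 0)
    (hΦ₁0 : PowerSeries.constantCoeff Φ₁ = 0)
    (heq : -(D^[3] Φ₀) ^ 2 * D^[2] Φ₁ + D^[3] Φ₀ * D^[4] Φ₀ * D Φ₁
      - PowerSeries.C (1 / 12 : ℂ) * (D^[4] Φ₀) ^ 2
      + PowerSeries.C (1 / 24 : ℂ) * D^[3] Φ₀ * D^[5] Φ₀ = 0) :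
    ∃ B : ℂ, Φ₁ = (PowerSeries.C (1 / 24 : ℂ)) * psLog (D^[3] Φ₀ * PowerSeries.C I₀₃⁻¹)
      + PowerSeries.C B *
        (D^[2] Φ₀ - PowerSeries.C (PowerSeries.constantCoeff (D^[2] Φ₀))) := by
  subst hD
  set Dv := ⇑(derivative ℂ) with hDv
  have h4 : Dv^[4] Φ₀ = derivative ℂ (Dv^[3] Φ₀) := Function.iterate_succ_apply' _ 3 Φ₀
  have h5 : Dv^[5] Φ₀ = derivative ℂ (derivative ℂ (Dv^[3] Φ₀)) := by
    rw [Function.iterate_succ_apply' _ 4 Φ₀, h4]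
  have h2 : Dv^[2] Φ₁ = derivative ℂ (derivative ℂ Φ₁) := by
    rw [Function.iterate_succ_apply' _ 1 Φ₁, Function.iterate_one]
  have h3 : derivative ℂ (Dv^[2] Φ₀) = Dv^[3] Φ₀ :=
    (Function.iterate_succ_apply' _ 2 Φ₀).symm
  rw [h4, h5, h2] at heq
  set F : PowerSeries ℂ := Dv^[3] Φ₀ with hF
  have hFc : constantCoeff F = I₀₃ := hI
  have hF0 : F ≠ 0 := by
    intro h; apply hI0; rw [← hFc, h, map_zero]
  have hFc0 : constantCoeff F ≠ 0 := by rw [hFc]; exact hI0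
  have hG1 : constantCoeff (F * C I₀₃⁻¹) = 1 := by
    simp [hFc, mul_inv_cancel₀ hI0]
  set ℓ := psLog (F * C I₀₃⁻¹) with hℓ
  have hkey0 : (F * C I₀₃⁻¹) * derivative ℂ ℓ = derivative ℂ (F * C I₀₃⁻¹) :=
    psLog_deriv _ hG1
  have hC0 : (C I₀₃⁻¹ : PowerSeries ℂ) ≠ 0 := by
    intro h
    have := congrArg (constantCoeff) h
    simp at this
    exact hI0 this
  have hkey : F * derivative ℂ ℓ = derivative ℂ F := by
    apply mul_right_cancel₀ hC0
    have hd : derivative ℂ (F * C I₀₃⁻¹) = derivative ℂ F * C I₀₃⁻¹ := by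
      rw [Derivation.leibniz, derivative_C]
      simp only [smul_eq_mul, smul_zero, mul_zero, add_zero, zero_add]
      ring
    rw [hd] at hkey0
    linear_combination hkey0
  have hkey2 : derivative ℂ F * derivative ℂ ℓ + F * derivative ℂ (derivative ℂ ℓ)
      = derivative ℂ (derivative ℂ F) := by
    have := congrArg (derivative ℂ) hkey
    rw [Derivation.leibniz] at this
    simp only [smul_eq_mul] at this
    linear_combination this
  set W : PowerSeries ℂ := derivative ℂ Φ₁ - C (1/24) * derivative ℂ ℓ with hWdef
  have hDW : derivative ℂ W = derivative ℂ (derivative ℂ Φ₁)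
      - C (1/24) * derivative ℂ (derivative ℂ ℓ) := by
    rw [hWdef, map_sub, Derivation.leibniz, derivative_C]
    simp only [smul_eq_mul, smul_zero, mul_zero, add_zero, zero_add]
  have hc12 : (C (1/12 : ℂ) : PowerSeries ℂ) = 2 * C (1/24 : ℂ) := by
    rw [show (2 : PowerSeries ℂ) = C 2 from (map_ofNat (C (R := ℂ)) 2).symm, ← map_mul]
    norm_num
  have hW2 : F * (F * derivative ℂ W) = F * (derivative ℂ F * W) := by
    rw [hDW, hWdef]
    linear_combination (-1 : PowerSeries ℂ) * heq - C (1/24) * F * hkey2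
      + 2 * C (1/24) * derivative ℂ F * hkey - (derivative ℂ F)^2 * hc12
  have hW : F * derivative ℂ W = derivative ℂ F * W := mul_left_cancel₀ hF0 hW2
  have hFinv : F * F⁻¹ = 1 := PowerSeries.mul_inv_cancel F hFc0
  have hq : derivative ℂ (W * F⁻¹)
      = derivative ℂ W * F⁻¹ + W * (-F⁻¹ ^ 2 * derivative ℂ F) := by
    rw [Derivation.leibniz, derivative_inv']
    simp only [smul_eq_mul]
    ring
  have hq0 : F * F * derivative ℂ (W * F⁻¹) = F * F * 0 := by
    rw [hq, mul_zero]
    linear_combination (F * derivative ℂ W) * hFinv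
      - (W * derivative ℂ F * (F * F⁻¹ + 1)) * hFinv + hW
  have hqd : derivative ℂ (W * F⁻¹) = 0 :=
    mul_left_cancel₀ (mul_ne_zero hF0 hF0) hq0
  set B : ℂ := constantCoeff (W * F⁻¹) with hB
  have hqC : W * F⁻¹ = C B := eq_C_of_derivative_eq_zero hqd
  have hWq : W = C B * F := by
    calc W = W * (F * F⁻¹) := by rw [hFinv, mul_one]
    _ = (W * F⁻¹) * F := by ring
    _ = C B * F := by rw [hqC]
  refine ⟨B, ?_⟩
  apply derivative.ext
  · rw [map_add, Derivation.leibniz, Derivation.leibniz, derivative_C, derivative_C,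
      map_sub, derivative_C, h3]
    have : derivative ℂ Φ₁ = C (1/24) * derivative ℂ ℓ + C B * F := by
      have := hWq
      rw [hWdef] at this
      linear_combination this
    rw [this]
    simp only [smul_eq_mul, mul_zero, zero_mul, add_zero, zero_add, sub_zero]
  · rw [hΦ₁0, map_add, map_mul, map_mul, map_sub]
    rw [show constantCoeff ℓ = 0 from psLog_constantCoeff _]
    simp
end

section
/- With f_k(b) = (1/24)[b] − (1/24)∑_{ε ∈ {0,1}^k, ‖ε‖≥2} (‖ε‖−2)!·[b−ε], for k ≥ 2 and positive integers b₁,…,b_{k−1}, one has the dilaton-type relation f_k(b₁, …, b_{k−1}, 1) = (b₁ + ⋯ + b_{k−1})·f_{k−1}(b₁, …, b_{k−1}). -/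
open Finset

/-- The multinomial coefficient `[b] = (b₁+⋯+b_k)!/(b₁!⋯b_k!)` of a vector of
integers, with the convention that it vanishes if any entry is negative. -/
noncomputable def multi {k : ℕ} (b : Fin k → ℤ) : ℚ :=
  if ∀ i, 0 ≤ b i then (Nat.multinomial Finset.univ fun i => (b i).toNat : ℚ) else 0

lemma multi_eq {k : ℕ} (b : Fin k → ℤ) (hb : ∀ i, 0 ≤ b i) :
    multi b = (Nat.multinomial Finset.univ fun i => (b i).toNat : ℚ) := if_pos hb

lemma specQ {k : ℕ} (f : Fin k → ℕ) :
    ((∏ i, Nat.factorial (f i) : ℕ) : ℚ) * (Nat.multinomial univ f : ℚ) = ((∑ i, f i).factorial : ℚ) := by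
  rw [← Nat.cast_mul, Nat.multinomial_spec]

lemma prodfact_ne {k : ℕ} (f : Fin k → ℕ) : ((∏ i, Nat.factorial (f i) : ℕ) : ℚ) ≠ 0 := by
  positivity

lemma natmulti_snoc_zero (m : ℕ) (f : Fin m → ℕ) :
    Nat.multinomial univ (Fin.snoc f 0 : Fin (m+1) → ℕ) = Nat.multinomial univ f := by
  rw [Nat.multinomial, Nat.multinomial]
  simp [Fin.sum_univ_castSucc, Fin.prod_univ_castSucc]

lemma natmulti_snoc_one (m : ℕ) (f : Fin m → ℕ) :
    (Nat.multinomial univ (Fin.snoc f 1 : Fin (m+1) → ℕ) : ℚ)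
      = ((∑ i, f i : ℕ) + 1) * Nat.multinomial univ f := by
  have h1 := specQ (Fin.snoc f 1 : Fin (m+1) → ℕ)
  have h2 := specQ f
  have hs : ∑ i, (Fin.snoc f 1 : Fin (m+1) → ℕ) i = ∑ i, f i + 1 := by
    simp [Fin.sum_univ_castSucc]
  have hp : (∏ i, Nat.factorial ((Fin.snoc f 1 : Fin (m+1) → ℕ) i)) = ∏ i, Nat.factorial (f i) := by
    simp [Fin.prod_univ_castSucc]
  rw [hs, hp, Nat.factorial_succ, Nat.cast_mul] at h1
  refine mul_left_cancel₀ (prodfact_ne f) ?_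
  push_cast at h1 h2 ⊢
  rw [h1, ← h2]; ring

lemma pascalQ {k : ℕ} (f : Fin (k+1) → ℕ) (hf : ∀ i, 1 ≤ f i) :
    ∑ i, (Nat.multinomial univ (Function.update f i (f i - 1)) : ℚ)
      = Nat.multinomial univ f := by
  have hN1 : 1 ≤ ∑ i, f i :=
    le_trans (hf 0) (Finset.single_le_sum (f := f) (fun i _ => Nat.zero_le _) (mem_univ 0))
  have key : ∀ i, ((∏ j, Nat.factorial (f j) : ℕ) : ℚ) *
      (Nat.multinomial univ (Function.update f i (f i - 1)) : ℚ)
      = (f i : ℚ) * (((∑ i, f i) - 1).factorial : ℚ) := by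
    intro i
    have hfi := hf i
    have hsum : ∑ j, Function.update f i (f i - 1) j = (∑ i, f i) - 1 := by
      have h1 : ∑ j, Function.update f i (f i - 1) j
          = (f i - 1) + ∑ j ∈ univ.erase i, f j := by
        rw [← Finset.add_sum_erase _ _ (mem_univ i), Function.update_self]
        congr 1
        exact Finset.sum_congr rfl fun j hj => Function.update_of_ne (Finset.ne_of_mem_erase hj) _ _
      have h2 : ∑ i, f i = f i + ∑ j ∈ univ.erase i, f j := (Finset.add_sum_erase _ _ (mem_univ i)).symm
      omega
    have hprod : (∏ j, Nat.factorial (f j)) =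
        f i * ∏ j, Nat.factorial (Function.update f i (f i - 1) j) := by
      have h1 : ∏ j, Nat.factorial (Function.update f i (f i - 1) j)
          = (f i - 1).factorial * ∏ j ∈ univ.erase i, Nat.factorial (f j) := by
        rw [← Finset.mul_prod_erase _ _ (mem_univ i), Function.update_self]
        congr 1
        exact Finset.prod_congr rfl fun j hj => by
          rw [Function.update_of_ne (Finset.ne_of_mem_erase hj)]
      have h2 : ∏ j, Nat.factorial (f j)
          = (f i).factorial * ∏ j ∈ univ.erase i, Nat.factorial (f j) :=
        (Finset.mul_prod_erase _ _ (mem_univ i)).symm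
      rw [h1, h2, ← mul_assoc]
      congr 1
      obtain ⟨m, hm⟩ : ∃ m, f i = m + 1 := ⟨f i - 1, by omega⟩
      rw [hm]
      simp [Nat.factorial_succ, mul_comm]
    have h := specQ (Function.update f i (f i - 1))
    rw [hsum] at h
    rw [hprod, Nat.cast_mul, mul_assoc, h]
  have hsum2 : ((∏ j, Nat.factorial (f j) : ℕ) : ℚ) *
      ∑ i, (Nat.multinomial univ (Function.update f i (f i - 1)) : ℚ)
      = ((∑ i, f i : ℕ) : ℚ) * (((∑ i, f i) - 1).factorial : ℚ) := by
    rw [Finset.mul_sum]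
    simp_rw [key]
    rw [← Finset.sum_mul, ← Nat.cast_sum]
  refine mul_left_cancel₀ (prodfact_ne f) ?_
  rw [hsum2, specQ]
  obtain ⟨M, hM⟩ : ∃ M, ∑ i, f i = M + 1 := ⟨(∑ i, f i) - 1, by omega⟩
  rw [hM]
  simp [Nat.factorial_succ]

-- ### multi-level lemmas

lemma toNat_snoc (m : ℕ) (c : Fin m → ℤ) (a : ℤ) :
    (fun i => ((Fin.snoc c a : Fin (m+1) → ℤ) i).toNat)
      = (Fin.snoc (fun i => (c i).toNat) a.toNat : Fin (m+1) → ℕ) := by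
  funext j
  induction j using Fin.lastCases with
  | last => simp
  | cast i => simp

lemma multi_snoc_zero {m : ℕ} (c : Fin m → ℤ) (hc : ∀ i, 0 ≤ c i) :
    multi (Fin.snoc c 0 : Fin (m+1) → ℤ) = multi c := by
  have hc' : ∀ i, 0 ≤ (Fin.snoc c 0 : Fin (m+1) → ℤ) i := by
    intro j
    induction j using Fin.lastCases with
    | last => simp
    | cast i => simp [hc i]
  rw [multi_eq _ hc', multi_eq _ hc, toNat_snoc]
  norm_num [natmulti_snoc_zero]

lemma multi_snoc_one {m : ℕ} (c : Fin m → ℤ) (hc : ∀ i, 0 ≤ c i) :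
    multi (Fin.snoc c 1 : Fin (m+1) → ℤ) = (((∑ i, c i : ℤ) : ℚ) + 1) * multi c := by
  have hc' : ∀ i, 0 ≤ (Fin.snoc c 1 : Fin (m+1) → ℤ) i := by
    intro j
    induction j using Fin.lastCases with
    | last => simp
    | cast i => simp [hc i]
  rw [multi_eq _ hc', multi_eq _ hc, toNat_snoc]
  norm_num [natmulti_snoc_one]
  left
  exact Finset.sum_congr rfl fun x _ => by
    rw [← Int.cast_natCast, Int.toNat_of_nonneg (hc x)]

/-- `f_k(b) = (1/24)·[b] − (1/24)·∑_{ε ∈ {0,1}^k, ‖ε‖ ≥ 2} (‖ε‖−2)!·[b−ε]`,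
where the 0-1 vectors `ε` are encoded by their supports `S ⊆ Fin k`. -/
noncomputable def fI {k : ℕ} (b : Fin k → ℤ) : ℚ :=
  (1 / 24) * multi b -
    (1 / 24) * ∑ S ∈ Finset.univ.filter (fun S : Finset (Fin k) => 2 ≤ S.card),
      (Nat.factorial (S.card - 2) : ℚ) * multi (b - fun i => if i ∈ S then 1 else 0)

section
variable {n : ℕ}


def emb : Fin (n+1) ↪ Fin (n+1+1) := ⟨Fin.castSucc, Fin.castSucc_injective _⟩

lemma last_not_mem_map (T : Finset (Fin (n+1))) : Fin.last (n+1) ∉ T.map emb := by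
  simp only [mem_map, emb, Function.Embedding.coeFn_mk]
  rintro ⟨i, -, h⟩
  exact absurd h (ne_of_lt (Fin.castSucc_lt_last i))

lemma pull_map (T : Finset (Fin (n+1))) :
    univ.filter (fun i => Fin.castSucc i ∈ T.map emb) = T := by
  ext i
  simp [emb, Fin.castSucc_inj]

lemma pull_insert (T : Finset (Fin (n+1))) :
    univ.filter (fun i => Fin.castSucc i ∈ insert (Fin.last (n+1)) (T.map emb)) = T := by
  ext i
  have : Fin.castSucc i ≠ Fin.last (n+1) := ne_of_lt (Fin.castSucc_lt_last i)
  simp [this, emb, Fin.castSucc_inj]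

lemma recon1 (S : Finset (Fin (n+1+1))) (hS : Fin.last (n+1) ∉ S) :
    (univ.filter fun i => Fin.castSucc i ∈ S).map emb = S := by
  ext j
  induction j using Fin.lastCases with
  | last => exact iff_of_false (last_not_mem_map _) hS
  | cast i => simp [emb, Fin.castSucc_inj]

lemma recon2 (S : Finset (Fin (n+1+1))) (hS : Fin.last (n+1) ∈ S) :
    insert (Fin.last (n+1)) ((univ.filter fun i => Fin.castSucc i ∈ S).map emb) = S := by
  ext j
  induction j using Fin.lastCases with
  | last => simp [hS]
  | cast i =>
    have h : Fin.castSucc i ≠ Fin.last (n+1) := ne_of_lt (Fin.castSucc_lt_last i)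
    simp [h, emb, Fin.castSucc_inj]

lemma split_sum (G : Finset (Fin (n+1+1)) → ℚ) :
    ∑ S : Finset (Fin (n+1+1)), G S
      = ∑ T : Finset (Fin (n+1)), G (T.map emb)
        + ∑ T : Finset (Fin (n+1)), G (insert (Fin.last (n+1)) (T.map emb)) := by
  rw [← Finset.sum_filter_add_sum_filter_not univ (fun S => Fin.last (n+1) ∉ S)]
  congr 1
  · refine Finset.sum_bij' (i := fun S _ => univ.filter (fun i => Fin.castSucc i ∈ S))
      (j := fun T _ => T.map emb) ?_ ?_ ?_ ?_ ?_
    · intro S hS; exact mem_univ _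
    · intro T hT
      simp only [mem_filter, mem_univ, true_and]
      exact last_not_mem_map T
    · intro S hS
      simp only [mem_filter, mem_univ, true_and] at hS
      exact recon1 S hS
    · intro T hT
      exact pull_map T
    · intro S hS
      simp only [mem_filter, mem_univ, true_and] at hS
      exact (congrArg G (recon1 S hS)).symm
  · refine Finset.sum_bij' (i := fun S _ => univ.filter (fun i => Fin.castSucc i ∈ S))
      (j := fun T _ => insert (Fin.last (n+1)) (T.map emb)) ?_ ?_ ?_ ?_ ?_
    · intro S hS; exact mem_univ _
    · intro T hT
      simp only [mem_filter, mem_univ, true_and, not_not]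
      exact mem_insert_self _ _
    · intro S hS
      simp only [mem_filter, mem_univ, true_and, not_not] at hS
      exact recon2 S hS
    · intro T hT
      exact pull_insert T
    · intro S hS
      simp only [mem_filter, mem_univ, true_and, not_not] at hS
      exact (congrArg G (recon2 S hS)).symm

lemma eps_map (b : Fin (n+1) → ℤ) (T : Finset (Fin (n+1))) :
    (Fin.snoc b 1 - fun i => if i ∈ T.map emb then (1:ℤ) else 0)
      = (Fin.snoc (b - fun i => if i ∈ T then (1:ℤ) else 0) 1 : Fin (n+1+1) → ℤ) := by
  funext j
  induction j using Fin.lastCases with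
  | last =>
    have h := last_not_mem_map T
    simp only [Pi.sub_apply, Fin.snoc_last, if_neg h]
    norm_num
  | cast i => simp [emb, Fin.castSucc_inj]

lemma eps_insert (b : Fin (n+1) → ℤ) (T : Finset (Fin (n+1))) :
    (Fin.snoc b 1 - fun i => if i ∈ insert (Fin.last (n+1)) (T.map emb) then (1:ℤ) else 0)
      = (Fin.snoc (b - fun i => if i ∈ T then (1:ℤ) else 0) 0 : Fin (n+1+1) → ℤ) := by
  funext j
  induction j using Fin.lastCases with
  | last => simp
  | cast i =>
    have h : Fin.castSucc i ≠ Fin.last (n+1) := ne_of_lt (Fin.castSucc_lt_last i)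
    simp [h, emb, Fin.castSucc_inj]

end

set_option maxHeartbeats 1600000 in
/-- dilaton-type relation: for `k ≥ 2` (here `k = n + 2`, so
`f_k` has `n + 1 ≥ 1` free arguments together with a final argument equal to 1)
and positive integers `b₁, …, b_{k−1}`,
`f_k(b₁, …, b_{k−1}, 1) = (b₁ + ⋯ + b_{k−1})·f_{k−1}(b₁, …, b_{k−1})`. -/
theorem fI_dilaton {n : ℕ} (b : Fin (n + 1) → ℤ) (hb : ∀ i, 1 ≤ b i) :
    fI (Fin.snoc b (1 : ℤ)) = ((∑ i, b i : ℤ) : ℚ) * fI b := by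
  classical
  have hb0 : ∀ i, (0:ℤ) ≤ b i := fun i => le_trans zero_le_one (hb i)
  set B : ℚ := ((∑ i, b i : ℤ) : ℚ) with hB
  set g : Finset (Fin (n+1)) → ℚ :=
    (fun T => multi (b - fun i => if i ∈ T then (1:ℤ) else 0)) with hg
  have heps0 : ∀ T : Finset (Fin (n+1)), ∀ i,
      (0:ℤ) ≤ (b - fun i => if i ∈ T then (1:ℤ) else 0) i := by
    intro T i
    have := hb i
    simp only [Pi.sub_apply]
    split <;> linarith
  -- sum of the reduced vector
  have hsumT : ∀ T : Finset (Fin (n+1)),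
      (((∑ i, (b - fun i => if i ∈ T then (1:ℤ) else 0) i : ℤ)) : ℚ) = B - T.card := by
    intro T
    have h1 : (∑ i, (b - fun i => if i ∈ T then (1:ℤ) else 0) i : ℤ)
        = (∑ i, b i) - T.card := by
      simp only [Pi.sub_apply, Finset.sum_sub_distrib]
      congr 1
      simp [Finset.sum_ite_mem]
    rw [h1, hB]
    push_cast
    ring
  -- the three multinomial computations
  have hM : multi (Fin.snoc b (1:ℤ)) = (B + 1) * multi b := by
    rw [multi_snoc_one b hb0, hB]
  have hV0 : ∀ T : Finset (Fin (n+1)),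
      multi (Fin.snoc b 1 - fun i => if i ∈ T.map emb then (1:ℤ) else 0)
        = (B - T.card + 1) * g T := by
    intro T
    rw [eps_map, multi_snoc_one _ (heps0 T), hsumT]
  have hV1 : ∀ T : Finset (Fin (n+1)),
      multi (Fin.snoc b 1 - fun i => if i ∈ insert (Fin.last (n+1)) (T.map emb) then (1:ℤ) else 0)
        = g T := by
    intro T
    rw [eps_insert, multi_snoc_zero _ (heps0 T)]
  -- Pascal
  have hPascal : ∑ T : Finset (Fin (n+1)), (if T.card = 1 then g T else 0) = multi b := by
    rw [← Finset.sum_filter]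
    have himage : univ.filter (fun T : Finset (Fin (n+1)) => T.card = 1)
        = univ.image (fun i => ({i} : Finset (Fin (n+1)))) := by
      ext T
      simp only [mem_filter, mem_univ, true_and, mem_image, Finset.card_eq_one]
      constructor
      · rintro ⟨a, ha⟩; exact ⟨a, ha.symm⟩
      · rintro ⟨a, ha⟩; exact ⟨a, ha.symm⟩
    rw [himage, Finset.sum_image (by intro i _ j _ h; simpa using h)]
    set f : Fin (n+1) → ℕ := fun i => (b i).toNat with hf
    have hf1 : ∀ i, 1 ≤ f i := by intro i; have := hb i; simp only [hf]; omega
    have hgi : ∀ i, g {i} = (Nat.multinomial univ (Function.update f i (f i - 1)) : ℚ) := by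
      intro i
      have hgid : g {i} = multi (b - fun j => if j ∈ ({i} : Finset (Fin (n+1))) then (1:ℤ) else 0) := rfl
      rw [hgid, multi_eq _ (heps0 {i})]
      have hfun : (fun j => ((b - fun i2 => if i2 ∈ ({i} : Finset (Fin (n+1))) then (1:ℤ) else 0) j).toNat)
          = Function.update f i (f i - 1) := by
        funext j
        by_cases hj : j = i
        · subst hj
          have := hb j
          simp only [Pi.sub_apply, Finset.mem_singleton, if_true, ite_true, eq_self_iff_true,
            Function.update_self, hf]
          omega
        · simp only [Pi.sub_apply, Finset.mem_singleton, if_neg hj, Function.update_of_ne hj, hf]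
          omega
      rw [hfun]
    simp_rw [hgi]
    rw [pascalQ f hf1, multi_eq _ hb0]
  -- expand fI and split the big sum
  simp only [fI]
  rw [Finset.sum_filter, Finset.sum_filter]
  have hsplit : (∑ a : Finset (Fin (n+1+1)), if 2 ≤ a.card then
        (Nat.factorial (a.card - 2) : ℚ) *
          multi (Fin.snoc b 1 - fun i => if i ∈ a then (1:ℤ) else 0) else 0)
      = (∑ T : Finset (Fin (n+1)), if 2 ≤ (T.map emb).card then
          (Nat.factorial ((T.map emb).card - 2) : ℚ) *
            multi (Fin.snoc b 1 - fun i => if i ∈ T.map emb then (1:ℤ) else 0) else 0)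
        + (∑ T : Finset (Fin (n+1)), if 2 ≤ (insert (Fin.last (n+1)) (T.map emb)).card then
          (Nat.factorial ((insert (Fin.last (n+1)) (T.map emb)).card - 2) : ℚ) *
            multi (Fin.snoc b 1 - fun i =>
              if i ∈ insert (Fin.last (n+1)) (T.map emb) then (1:ℤ) else 0) else 0) :=
    split_sum (fun S => if 2 ≤ S.card then
      (Nat.factorial (S.card - 2) : ℚ) *
        multi (Fin.snoc b 1 - fun i => if i ∈ S then (1:ℤ) else 0) else 0)
  rw [hsplit]
  have hcard0 : ∀ T : Finset (Fin (n+1)), (T.map emb).card = T.card := fun T => Finset.card_map _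
  have hcard1 : ∀ T : Finset (Fin (n+1)),
      (insert (Fin.last (n+1)) (T.map emb)).card = T.card + 1 := by
    intro T
    rw [Finset.card_insert_of_notMem (last_not_mem_map T), Finset.card_map]
  -- rewrite both partial sums
  have hS0 : (∑ T : Finset (Fin (n+1)), if 2 ≤ (T.map emb).card then
        (Nat.factorial ((T.map emb).card - 2) : ℚ) *
          multi (Fin.snoc b 1 - fun i => if i ∈ T.map emb then (1:ℤ) else 0) else 0)
      = ∑ T : Finset (Fin (n+1)), if 2 ≤ T.card then
          (Nat.factorial (T.card - 2) : ℚ) * ((B - T.card + 1) * g T) else 0 := by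
    refine Finset.sum_congr rfl fun T _ => ?_
    rw [hcard0, hV0]
  have hS1 : (∑ T : Finset (Fin (n+1)), if 2 ≤ (insert (Fin.last (n+1)) (T.map emb)).card then
        (Nat.factorial ((insert (Fin.last (n+1)) (T.map emb)).card - 2) : ℚ) *
          multi (Fin.snoc b 1 - fun i =>
            if i ∈ insert (Fin.last (n+1)) (T.map emb) then (1:ℤ) else 0) else 0)
      = ∑ T : Finset (Fin (n+1)), if 2 ≤ T.card + 1 then
          (Nat.factorial (T.card + 1 - 2) : ℚ) * g T else 0 := by
    refine Finset.sum_congr rfl fun T _ => ?_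
    rw [hcard1, hV1]
  rw [hS0, hS1, hM]
  -- the termwise identity
  have key : ∀ T : Finset (Fin (n+1)),
      (if 2 ≤ T.card then (Nat.factorial (T.card - 2) : ℚ) * ((B - T.card + 1) * g T) else 0)
        + (if 2 ≤ T.card + 1 then (Nat.factorial (T.card + 1 - 2) : ℚ) * g T else 0)
      = B * (if 2 ≤ T.card then (Nat.factorial (T.card - 2) : ℚ) * g T else 0)
        + (if T.card = 1 then g T else 0) := by
    intro T
    by_cases h2 : 2 ≤ T.card
    · obtain ⟨m, hm⟩ : ∃ m, T.card = m + 2 := ⟨T.card - 2, by omega⟩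
      have h1 : ¬ T.card = 1 := by omega
      rw [if_pos h2, if_pos (by omega), if_pos h2, if_neg h1, hm]
      have : m + 2 + 1 - 2 = m + 1 := by omega
      rw [this, Nat.factorial_succ]
      have : m + 2 - 2 = m := by omega
      rw [this]
      push_cast
      ring
    · by_cases h1 : T.card = 1
      · rw [if_neg h2, if_neg h2, if_pos (by omega), if_pos h1, h1]
        norm_num
      · have h0 : T.card = 0 := by omega
        rw [if_neg h2, if_neg h2, if_neg (by omega), if_neg h1]
        ring
  have hsum : (∑ T : Finset (Fin (n+1)), if 2 ≤ T.card then
          (Nat.factorial (T.card - 2) : ℚ) * ((B - T.card + 1) * g T) else 0)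
      + (∑ T : Finset (Fin (n+1)), if 2 ≤ T.card + 1 then
          (Nat.factorial (T.card + 1 - 2) : ℚ) * g T else 0)
      = B * (∑ T : Finset (Fin (n+1)), if 2 ≤ T.card then
          (Nat.factorial (T.card - 2) : ℚ) * g T else 0) + multi b := by
    rw [← Finset.sum_add_distrib]
    simp_rw [key]
    rw [Finset.sum_add_distrib, hPascal, Finset.mul_sum]
  have hfinal := hsum
  linarith [hfinal]
end
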